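/- arXiv:2410.18268 — 3 statements merged into one kernel-verified Lean document; each statement's English description precedes it below -/
import Mathlib

section
/- For any weight vector w in the probability simplex Δ_{k-1} and any ε > 0, the inflated argmax set argmaxᵉ(w) = {m : dist(w, R_mᵉ) < ε} is nonempty, where R_mᵉ = {q ∈ Δ_{k-1} : q_m ≥ max_{m'≠m} q_{m'} + ε/√2} and dist denotes Euclidean distance. -/
open scoped BigOperators

noncomputable section

def probSimplex (k : ℕ) : Set (EuclideanSpace ℝ (Fin k)) :=
  {w | (∀ i, 0 ≤ w i) ∧ ∑ i, w i = 1}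

def region (k : ℕ) (ε : ℝ) (m : Fin k) : Set (EuclideanSpace ℝ (Fin k)) :=
  {q | q ∈ probSimplex k ∧ ∀ j, j ≠ m → q j + ε / Real.sqrt 2 ≤ q m}

def infArgmax (k : ℕ) (ε : ℝ) (w : EuclideanSpace ℝ (Fin k)) : Set (Fin k) :=
  {m | Metric.infDist w (region k ε m) < ε}

/-! Pull a maximal coordinate `m` of `w` towards the vertex `e_m` by `c = ε/√2`: the point
`q = (1 - c) w + c e_m` has `q_m - q_j ≥ c`, so it lies in `R_mᵉ`, and `‖w - q‖ = c ‖w - e_m‖`.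
Since `w_m` is maximal, `‖w‖² ≤ w_m`, whence `‖w - e_m‖² ≤ 1 - w_m ≤ 1` and `‖w - q‖ ≤ c < ε`. -/

open AffineMap

variable {k : ℕ} {w : EuclideanSpace ℝ (Fin k)} {m : Fin k}

lemma convex_probSimplex : Convex ℝ (probSimplex k) := by
  intro x hx y hy a b ha hb hab
  refine ⟨fun i => ?_, ?_⟩
  · simpa using add_nonneg (mul_nonneg ha (hx.1 i)) (mul_nonneg hb (hy.1 i))
  · simp [Finset.sum_add_distrib, ← Finset.mul_sum, hx.2, hy.2, hab]

lemma single_mem_probSimplex (m : Fin k) : EuclideanSpace.single m (1 : ℝ) ∈ probSimplex k := by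
  refine ⟨fun i => ?_, by simp⟩
  by_cases h : i = m <;> simp [h]

lemma exists_forall_le_of_mem_probSimplex (hw : w ∈ probSimplex k) : ∃ m, ∀ j, w j ≤ w m := by
  obtain ⟨m, -, hm⟩ := Finset.exists_max_image Finset.univ w
    (Finset.nonempty_of_sum_ne_zero (hw.2 ▸ one_ne_zero))
  exact ⟨m, fun j => hm j (Finset.mem_univ j)⟩

lemma norm_sq_le_of_mem_probSimplex (hw : w ∈ probSimplex k) (hm : ∀ j, w j ≤ w m) :
    ‖w‖ ^ 2 ≤ w m := by
  calc ‖w‖ ^ 2 = ∑ i, w i * w i := by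
        rw [EuclideanSpace.norm_sq_eq]
        exact Finset.sum_congr rfl fun i _ => by rw [Real.norm_eq_abs, sq_abs, sq]
    _ ≤ ∑ i, w m * w i := Finset.sum_le_sum fun i _ => mul_le_mul_of_nonneg_right (hm i) (hw.1 i)
    _ = w m := by rw [← Finset.mul_sum, hw.2, mul_one]

lemma dist_single_le_one_of_mem_probSimplex (hw : w ∈ probSimplex k) (hm : ∀ j, w j ≤ w m) :
    dist w (EuclideanSpace.single m (1 : ℝ)) ≤ 1 := by
  have hsq : dist w (EuclideanSpace.single m (1 : ℝ)) ^ 2 ≤ 1 := by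
    rw [dist_eq_norm, norm_sub_sq_real, EuclideanSpace.inner_single_right]
    simp only [PiLp.norm_single, norm_one, one_pow, one_mul, RCLike.conj_to_real]
    linarith [norm_sq_le_of_mem_probSimplex hw hm, hw.1 m]
  exact (pow_le_one_iff_of_nonneg dist_nonneg two_ne_zero).mp hsq

lemma lineMap_single_mem_region {ε : ℝ} (hw : w ∈ probSimplex k) (hm : ∀ j, w j ≤ w m)
    (hε : 0 ≤ ε) (hε2 : ε / Real.sqrt 2 ≤ 1) :
    lineMap w (EuclideanSpace.single m (1 : ℝ)) (ε / Real.sqrt 2) ∈ region k ε m := by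
  refine ⟨convex_probSimplex.lineMap_mem hw (single_mem_probSimplex m) ⟨by positivity, hε2⟩,
    fun j hj => ?_⟩
  have hwj : (1 - ε / Real.sqrt 2) * w j ≤ (1 - ε / Real.sqrt 2) * w m :=
    mul_le_mul_of_nonneg_left (hm j) (by linarith)
  simpa [lineMap_apply_module, hj] using hwj

theorem inflated_argmax_nonempty_general (k : ℕ) (ε : ℝ) (hε : 0 < ε)
    (hε2 : ε / Real.sqrt 2 ≤ 1)
    (w : EuclideanSpace ℝ (Fin k)) (hw : w ∈ probSimplex k) :
    (infArgmax k ε w).Nonempty := by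
  obtain ⟨m, hm⟩ := exists_forall_le_of_mem_probSimplex hw
  refine ⟨m, ?_⟩
  calc Metric.infDist w (region k ε m)
      ≤ dist w (lineMap w (EuclideanSpace.single m (1 : ℝ)) (ε / Real.sqrt 2)) :=
        Metric.infDist_le_dist_of_mem (lineMap_single_mem_region hw hm hε.le hε2)
    _ = ε / Real.sqrt 2 * dist w (EuclideanSpace.single m (1 : ℝ)) := by
        rw [dist_comm, dist_lineMap_left, Real.norm_of_nonneg (by positivity)]
    _ ≤ ε / Real.sqrt 2 :=
        mul_le_of_le_one_right (by positivity) (dist_single_le_one_of_mem_probSimplex hw hm)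
    _ < ε := div_lt_self hε Real.one_lt_sqrt_two

theorem inflated_argmax_nonempty (k : ℕ) (hk : 2 ≤ k) (ε : ℝ) (hε : 0 < ε)
    (hε2 : ε / Real.sqrt 2 ≤ 1)
    (w : EuclideanSpace ℝ (Fin k)) (hw : w ∈ probSimplex k) :
    (infArgmax k ε w).Nonempty :=
  inflated_argmax_nonempty_general k ε hε hε2 w hw
end
end

section
/- If w ∈ Δ_{k-1} has a unique maximizer m with margin w_m − max_{j≠m} w_j ≥ ε/√2 + ε·√2 (a sufficiently large gap), then the inflated argmax is the singleton {m}: argmaxᵉ(w) = {m}. -/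
open scoped BigOperators

noncomputable section

/-! For `q ∈ R_{m'}` with `m' ≠ m`, the margins of `w` and `q` point in opposite directions on
the coordinates `m, m'`, giving `(w_m - q_m) + (q_{m'} - w_{m'}) ≥ 2√2 ε`; as
`a + b ≤ √2 (a² + b²)^{1/2}`, this forces `‖w - q‖ ≥ 2ε > ε`. The vertex `e_{m'}` lies in
`R_{m'}`, so the infimum distance is not the junk value `0` of an empty set. -/

theorem EuclideanSpace.sub_add_sub_le_sqrt_two_mul_dist {ι : Type*} [Fintype ι]
    (x y : EuclideanSpace ℝ ι) {i j : ι} (hij : i ≠ j) :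
    (x i - y i) + (y j - x j) ≤ √2 * dist x y := by
  classical
  have hpair : (x i - y i) ^ 2 + (y j - x j) ^ 2 ≤ dist x y ^ 2 := by
    rw [EuclideanSpace.dist_eq, Real.sq_sqrt (by positivity)]
    calc (x i - y i) ^ 2 + (y j - x j) ^ 2 = ∑ l ∈ {i, j}, dist (x l) (y l) ^ 2 := by
          rw [Finset.sum_pair hij, Real.dist_eq, Real.dist_eq, sq_abs, sq_abs, ← neg_sub (x j),
            neg_sq]
      _ ≤ ∑ l, dist (x l) (y l) ^ 2 :=
          Finset.sum_le_sum_of_subset_of_nonneg (Finset.subset_univ _) fun _ _ _ => sq_nonneg _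
  calc (x i - y i) + (y j - x j) ≤ √(2 * ((x i - y i) ^ 2 + (y j - x j) ^ 2)) :=
        Real.le_sqrt_of_sq_le add_sq_le
    _ ≤ √(2 * dist x y ^ 2) := by gcongr
    _ = √2 * dist x y := by rw [Real.sqrt_mul zero_le_two, Real.sqrt_sq dist_nonneg]

theorem single_mem_region {k : ℕ} {ε : ℝ} (hε : ε / √2 ≤ 1) (m : Fin k) :
    EuclideanSpace.single m 1 ∈ region k ε m := by
  refine ⟨⟨fun i => ?_, by simp⟩, fun j hj => ?_⟩
  · simp only [PiLp.single_apply]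
    split_ifs <;> norm_num
  · simpa [hj] using hε

theorem two_mul_le_infDist_region {k : ℕ} {ε : ℝ} (hε : ε / √2 ≤ 1)
    {w : EuclideanSpace ℝ (Fin k)} {m m' : Fin k} (hm' : m' ≠ m)
    (hgap : w m' + (ε / √2 + ε * √2) ≤ w m) :
    2 * ε ≤ Metric.infDist w (region k ε m') := by
  refine (Metric.le_infDist ⟨_, single_mem_region hε m'⟩).2 fun q hq => ?_
  have hq_gap : q m + ε / √2 ≤ q m' := hq.2 m hm'.symm
  have hdist := EuclideanSpace.sub_add_sub_le_sqrt_two_mul_dist w q hm'.symm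
  have hdiv : ε / √2 = ε * √2 / 2 := by
    field_simp
    rw [Real.sq_sqrt zero_le_two]
  have : √2 * (2 * ε) ≤ √2 * dist w q := by linarith
  exact le_of_mul_le_mul_left this (by positivity)

theorem inflated_argmax_singleton_of_margin_general (k : ℕ) (ε : ℝ) (hε : 0 < ε)
    (hε2 : ε / Real.sqrt 2 ≤ 1)
    (w : EuclideanSpace ℝ (Fin k)) (hw : w ∈ probSimplex k) (m : Fin k)
    (hmargin : ∀ j, j ≠ m → w j + (ε / Real.sqrt 2 + ε * Real.sqrt 2) ≤ w m) :
    infArgmax k ε w = {m} := by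
  ext m'
  simp only [infArgmax, Set.mem_ofPred_eq, Set.mem_singleton_iff]
  constructor
  · intro hlt
    by_contra hm'
    linarith [two_mul_le_infDist_region hε2 hm' (hmargin m' hm')]
  · rintro rfl
    have hw_mem : w ∈ region k ε m' := ⟨hw, fun j hj => by
      have : 0 ≤ ε * √2 := by positivity
      linarith [hmargin j hj]⟩
    rwa [Metric.infDist_zero_of_mem hw_mem]

theorem inflated_argmax_singleton_of_margin (k : ℕ) (hk : 2 ≤ k) (ε : ℝ) (hε : 0 < ε)
    (hε2 : ε / Real.sqrt 2 ≤ 1)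
    (w : EuclideanSpace ℝ (Fin k)) (hw : w ∈ probSimplex k) (m : Fin k)
    (hmargin : ∀ j, j ≠ m → w j + (ε / Real.sqrt 2 + ε * Real.sqrt 2) ≤ w m) :
    infArgmax k ε w = {m} :=
  inflated_argmax_singleton_of_margin_general k ε hε hε2 w hw m hmargin
end
end

section
/- Bagged weights differ little under leave-one-out resampling in expectation: if w^{∖i} denotes the (infinite-bag) subbagged weight vector computed from the dataset with sample i removed and w the subbagged weights on the full dataset of size n with bag size K < n, then averaging over i, (1/n)Σᵢ ‖w − w^{∖i}‖₂² ≤ (1/(n−1))·(ρ/(1−ρ))·(1 − 1/k) where ρ = K/n and k is the number of candidate models, provided each base weight vector lies in the probability simplex Δ_{k-1}. -/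
open scoped BigOperators

noncomputable section

/-- Infinite-ensemble subbagged weights: average of the base algorithm's output over all
bags (subsets of the index set `I`) of size `K`. -/
def subbagWeights {n k : ℕ} (A : Finset (Fin n) → EuclideanSpace ℝ (Fin k))
    (I : Finset (Fin n)) (K : ℕ) : EuclideanSpace ℝ (Fin k) :=
  (((I.powersetCard K).card : ℝ)⁻¹) • ∑ S ∈ I.powersetCard K, A S

/-!
Put `w := subbagWeights A univ K` and `y S := A S - w`, so that `∑ S, y S = 0` over the
`K`-subsets `S`. The bags avoiding `i` are those of the full ensemble minus those containing `i`;
as the `y S` sum to zero this gives `w - w^{∖i} = C(n-1,K)⁻¹ • ∑_{S ∋ i} y S`.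

Let `a i := ∑_{S ∋ i} y S` and `b S := ∑_{i ∈ S} a i`. Two distinct points lie in the same number
of `K`-subsets, so `∑_S ‖b S‖² = c ‖∑_i a i‖² + λ ∑_i ‖a i‖²` for some `c` and for
`λ = C(n-1,K) - C(n-2,K)`, and here `∑_i a i = K • ∑_S y S = 0`. Since
`∑_i ‖a i‖² = ∑_S ⟪b S, y S⟫`, Cauchy–Schwarz gives `(∑_i ‖a i‖²)² ≤ λ ∑_i ‖a i‖² ∑_S ‖y S‖²`,
i.e. `∑_i ‖a i‖² ≤ λ ∑_S ‖y S‖²`. On the simplex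
`∑_S ‖y S‖² = ∑_S ‖A S‖² - C(n,K) ‖w‖² ≤ C(n,K) (1 - 1/k)`, and two instances of
`C(m,K) (m+1) = C(m+1,K) (m+1-K)` turn `λ C(n,K) / (n C(n-1,K)²)` into `K / ((n-1)(n-K))`.
-/

open Finset
open scoped RealInnerProductSpace

namespace Finset

variable {α : Type*} [DecidableEq α]

theorem powersetCard_erase (K : ℕ) (s : Finset α) (i : α) :
    powersetCard K (s.erase i) = (powersetCard K s).filter (i ∉ ·) := by
  ext S
  simp only [mem_powersetCard, subset_erase, mem_filter]
  tauto

theorem card_filter_mem_powersetCard_add {K : ℕ} {s : Finset α} {i : α} (hi : i ∈ s) :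
    #((powersetCard K s).filter (i ∈ ·)) + (#s - 1).choose K = (#s).choose K := by
  rw [← card_erase_of_mem hi, ← card_powersetCard, powersetCard_erase,
    card_filter_add_card_filter_not, card_powersetCard]

theorem cast_card_filter_mem_and_mem_powersetCard [Fintype α] (K : ℕ) (i j : α) :
    (#((powersetCard K (univ : Finset α)).filter (fun S => i ∈ S ∧ j ∈ S)) : ℝ) =
      ((Fintype.card α).choose K - 2 * (Fintype.card α - 1).choose K
          + (Fintype.card α - 2).choose K : ℝ) +
        if i = j then ((Fintype.card α - 1).choose K - (Fintype.card α - 2).choose K : ℝ)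
        else 0 := by
  have hdeg := card_filter_mem_powersetCard_add (K := K) (mem_univ i)
  rw [card_univ] at hdeg
  split_ifs with hij
  · subst hij
    simp only [and_self]
    have := congrArg (Nat.cast (R := ℝ)) hdeg
    push_cast at this
    linarith
  · -- the bags containing `i` but not `j` are the bags of `univ.erase j` containing `i`
    have hj : i ∈ univ.erase j := mem_erase.2 ⟨hij, mem_univ i⟩
    have hdeg' := card_filter_mem_powersetCard_add (K := K) hj
    rw [card_erase_of_mem (mem_univ j), card_univ, Nat.sub_sub, powersetCard_erase,
      filter_filter] at hdeg'
    have hsplit := card_filter_add_card_filter_not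
      (s := (powersetCard K (univ : Finset α)).filter (i ∈ ·)) (j ∈ ·)
    rw [filter_filter, filter_filter] at hsplit
    have e1 := congrArg (Nat.cast (R := ℝ)) hdeg
    have e2 := congrArg (Nat.cast (R := ℝ)) hdeg'
    have e3 := congrArg (Nat.cast (R := ℝ)) hsplit
    push_cast at e1 e2 e3
    simp only [and_comm (a := j ∉ _)] at e2
    linarith

end Finset

theorem Nat.cast_choose_mul_succ (m K : ℕ) :
    (m.choose K : ℝ) * (m + 1) = (m + 1).choose K * (m + 1 - K) := by
  rcases le_or_gt K (m + 1) with hK | hK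
  · have h := congrArg (Nat.cast (R := ℝ)) (Nat.choose_mul_succ_eq m K)
    push_cast [Nat.cast_sub hK] at h
    exact h
  · simp [Nat.choose_eq_zero_of_lt hK, Nat.choose_eq_zero_of_lt (by omega : m < K)]

theorem Nat.cast_choose_sub_choose_mul_choose_div (m K : ℕ) (hK : K < m + 2) :
    ((m + 1).choose K - m.choose K : ℝ) * (m + 2).choose K / ((m + 1).choose K) ^ 2 / (m + 2) =
      K / ((m + 1) * (m + 2 - K)) := by
  have e1 := Nat.cast_choose_mul_succ m K
  have e2 := Nat.cast_choose_mul_succ (m + 1) K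
  push_cast at e2
  have hN' : ((m + 1).choose K : ℝ) ≠ 0 := by exact_mod_cast (Nat.choose_pos (by omega)).ne'
  have hmK : (m + 2 - K : ℝ) ≠ 0 := sub_ne_zero.2 (by exact_mod_cast hK.ne')
  rw [div_div, div_eq_div_iff (mul_ne_zero (pow_ne_zero 2 hN') (by positivity))
    (mul_ne_zero (by positivity) hmK)]
  linear_combination (-((m + 2).choose K : ℝ) * (m + 2 - K)) * e1 - ((m + 1).choose K * K : ℝ) * e2

section Design

variable {α E : Type*} [Fintype α] [DecidableEq α] [NormedAddCommGroup E] [InnerProductSpace ℝ E]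

theorem sum_sum_filter_mem_eq_sum_sum_mem {M : Type*} [AddCommMonoid M]
    (𝒮 : Finset (Finset α)) (f : α → Finset α → M) :
    ∑ i, ∑ S ∈ 𝒮.filter (i ∈ ·), f i S = ∑ S ∈ 𝒮, ∑ i ∈ S, f i S :=
  sum_comm' fun i S => by simp only [mem_univ, mem_filter, true_and, and_comm]

theorem sum_sum_mem_sum_mem_eq_sum_sum_card_smul {M : Type*} [AddCommMonoid M]
    (𝒮 : Finset (Finset α)) (g : α → α → M) :
    ∑ S ∈ 𝒮, ∑ i ∈ S, ∑ j ∈ S, g i j =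
      ∑ i, ∑ j, #(𝒮.filter (fun S => i ∈ S ∧ j ∈ S)) • g i j := by
  rw [← sum_sum_filter_mem_eq_sum_sum_mem]
  refine sum_congr rfl fun i _ => ?_
  rw [← sum_sum_filter_mem_eq_sum_sum_mem]
  simp only [filter_filter, sum_const]

theorem sum_norm_sq_sum_mem_eq (𝒮 : Finset (Finset α)) {c l : ℝ}
    (h𝒮 : ∀ i j : α, (#(𝒮.filter (fun S => i ∈ S ∧ j ∈ S)) : ℝ) = c + if i = j then l else 0)
    (a : α → E) :
    ∑ S ∈ 𝒮, ‖∑ i ∈ S, a i‖ ^ 2 = c * ‖∑ i, a i‖ ^ 2 + l * ∑ i, ‖a i‖ ^ 2 := by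
  simp_rw [← real_inner_self_eq_norm_sq, sum_inner, inner_sum]
  rw [sum_sum_mem_sum_mem_eq_sum_sum_card_smul]
  simp_rw [← Nat.cast_smul_eq_nsmul ℝ, h𝒮, add_smul, sum_add_distrib, ite_smul, zero_smul,
    sum_ite_eq, mem_univ, if_true, smul_eq_mul, ← mul_sum]

theorem sum_norm_sq_sum_filter_mem_le (𝒮 : Finset (Finset α)) {K : ℕ} (h𝒮K : ∀ S ∈ 𝒮, #S = K)
    {c l : ℝ} (hl : 0 ≤ l)
    (h𝒮 : ∀ i j : α, (#(𝒮.filter (fun S => i ∈ S ∧ j ∈ S)) : ℝ) = c + if i = j then l else 0)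
    {y : Finset α → E} (hy : ∑ S ∈ 𝒮, y S = 0) :
    ∑ i, ‖∑ S ∈ 𝒮.filter (i ∈ ·), y S‖ ^ 2 ≤ l * ∑ S ∈ 𝒮, ‖y S‖ ^ 2 := by
  set a : α → E := fun i => ∑ S ∈ 𝒮.filter (i ∈ ·), y S
  have ha : ∑ i, a i = 0 := by
    rw [sum_sum_filter_mem_eq_sum_sum_mem, ← smul_zero K, ← hy, smul_sum]
    exact sum_congr rfl fun S hS => by rw [sum_const, h𝒮K S hS]
  have hb : ∑ S ∈ 𝒮, ‖∑ i ∈ S, a i‖ ^ 2 = l * ∑ i, ‖a i‖ ^ 2 := by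
    simp [sum_norm_sq_sum_mem_eq 𝒮 h𝒮, ha]
  have hdual : ∑ i, ‖a i‖ ^ 2 = ∑ S ∈ 𝒮, ⟪∑ i ∈ S, a i, y S⟫ := by
    simp_rw [← real_inner_self_eq_norm_sq, sum_inner]
    rw [← sum_sum_filter_mem_eq_sum_sum_mem]
    simp only [a, inner_sum]
  have ha_nonneg : 0 ≤ ∑ i, ‖a i‖ ^ 2 := by positivity
  have hcs : (∑ i, ‖a i‖ ^ 2) ^ 2 ≤ (l * ∑ i, ‖a i‖ ^ 2) * ∑ S ∈ 𝒮, ‖y S‖ ^ 2 := by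
    rw [← hb]
    calc (∑ i, ‖a i‖ ^ 2) ^ 2 ≤ (∑ S ∈ 𝒮, ‖∑ i ∈ S, a i‖ * ‖y S‖) ^ 2 := by
          gcongr
          rw [hdual]
          exact sum_le_sum fun S _ => real_inner_le_norm _ _
      _ ≤ _ := sum_mul_sq_le_sq_mul_sq _ _ _
  have hy_nonneg : 0 ≤ ∑ S ∈ 𝒮, ‖y S‖ ^ 2 := by positivity
  change ∑ i, ‖a i‖ ^ 2 ≤ _
  nlinarith [mul_nonneg hl hy_nonneg]

theorem sum_norm_sq_sum_filter_mem_powersetCard_le (K : ℕ) {y : Finset α → E}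
    (hy : ∑ S ∈ powersetCard K univ, y S = 0) :
    ∑ i, ‖∑ S ∈ (powersetCard K univ).filter (i ∈ ·), y S‖ ^ 2 ≤
      ((Fintype.card α - 1).choose K - (Fintype.card α - 2).choose K : ℝ) *
        ∑ S ∈ powersetCard K univ, ‖y S‖ ^ 2 := by
  refine sum_norm_sq_sum_filter_mem_le _ (fun S hS => (mem_powersetCard.1 hS).2) ?_
    (cast_card_filter_mem_and_mem_powersetCard K) hy
  exact sub_nonneg.2 (by exact_mod_cast Nat.choose_le_choose K (by omega))

end Design

section Average

variable {ι E : Type*} [NormedAddCommGroup E] [InnerProductSpace ℝ E] {s : Finset ι}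

theorem sum_sub_average_eq_zero (hs : s.Nonempty) (x : ι → E) :
    ∑ i ∈ s, (x i - (#s : ℝ)⁻¹ • ∑ j ∈ s, x j) = 0 := by
  rw [sum_sub_distrib, sum_const, ← Nat.cast_smul_eq_nsmul ℝ, smul_smul,
    mul_inv_cancel₀ (by simpa using hs.ne_empty), one_smul, sub_self]

theorem sub_average_filter_not_eq {x : ι → E} {m : E} (hm : ∑ i ∈ s, (x i - m) = 0) (p : ι → Prop)
    [DecidablePred p] (hp : #(s.filter (¬ p ·)) ≠ 0) :
    m - (#(s.filter (¬ p ·)) : ℝ)⁻¹ • ∑ i ∈ s.filter (¬ p ·), x i =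
      (#(s.filter (¬ p ·)) : ℝ)⁻¹ • ∑ i ∈ s.filter p, (x i - m) := by
  rw [← sum_filter_add_sum_filter_not s p, add_eq_zero_iff_eq_neg] at hm
  rw [hm, sum_sub_distrib, sum_const, ← Nat.cast_smul_eq_nsmul ℝ, neg_sub, smul_sub, smul_smul,
    inv_mul_cancel₀ (by exact_mod_cast hp), one_smul]

theorem sum_norm_sq_sub_eq {x : ι → E} {m : E} (hm : ∑ i ∈ s, (x i - m) = 0) :
    ∑ i ∈ s, ‖x i - m‖ ^ 2 = ∑ i ∈ s, ‖x i‖ ^ 2 - #s * ‖m‖ ^ 2 := by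
  have hsum : ∑ i ∈ s, x i = (#s : ℝ) • m := by
    rwa [sum_sub_distrib, sum_const, ← Nat.cast_smul_eq_nsmul ℝ, sub_eq_zero] at hm
  simp_rw [norm_sub_sq_real, sum_add_distrib, sum_sub_distrib, ← mul_sum, ← sum_inner, hsum,
    real_inner_smul_left, real_inner_self_eq_norm_sq, sum_const, nsmul_eq_mul]
  ring

end Average

section Simplex

variable {k : ℕ}

theorem norm_sq_le_one_of_mem_probSimplex {v : EuclideanSpace ℝ (Fin k)} (hv : v ∈ probSimplex k) :
    ‖v‖ ^ 2 ≤ 1 := by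
  obtain ⟨hnonneg, hsum⟩ := hv
  have hle : ∀ j, v j ≤ 1 := fun j =>
    hsum ▸ single_le_sum (fun j _ => hnonneg j) (mem_univ j)
  rw [EuclideanSpace.norm_sq_eq, ← hsum]
  exact sum_le_sum fun j _ => by
    rw [Real.norm_eq_abs, sq_abs]; nlinarith [hnonneg j, hle j]

theorem one_div_le_norm_sq_of_sum_eq_one {v : EuclideanSpace ℝ (Fin k)} (hv : ∑ j, v j = 1) :
    1 / (k : ℝ) ≤ ‖v‖ ^ 2 := by
  have hcs := sq_sum_le_card_mul_sum_sq (s := univ) (f := fun j => v j)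
  simp only [hv, card_univ, Fintype.card_fin, one_pow] at hcs
  rcases k.eq_zero_or_pos with rfl | hk
  · simp [EuclideanSpace.norm_sq_eq]
  rw [EuclideanSpace.norm_sq_eq, div_le_iff₀ (by positivity)]
  simpa [Real.norm_eq_abs, sq_abs, mul_comm] using hcs

theorem sum_norm_sq_sub_average_le_of_mem_probSimplex {ι : Type*} {s : Finset ι} (hs : s.Nonempty)
    {x : ι → EuclideanSpace ℝ (Fin k)} (hx : ∀ i ∈ s, x i ∈ probSimplex k) :
    ∑ i ∈ s, ‖x i - (#s : ℝ)⁻¹ • ∑ j ∈ s, x j‖ ^ 2 ≤ #s * (1 - 1 / (k : ℝ)) := by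
  have hmean_sum : ∑ j, ((#s : ℝ)⁻¹ • ∑ i ∈ s, x i) j = 1 := by
    simp only [PiLp.smul_apply, WithLp.ofLp_sum, Finset.sum_apply, smul_eq_mul, ← mul_sum]
    rw [sum_comm, sum_congr rfl fun i hi => (hx i hi).2, sum_const, nsmul_one,
      inv_mul_cancel₀ (by simpa using hs.ne_empty)]
  rw [sum_norm_sq_sub_eq (sum_sub_average_eq_zero hs x), mul_sub, mul_one]
  gcongr
  · calc ∑ i ∈ s, ‖x i‖ ^ 2 ≤ ∑ i ∈ s, (1 : ℝ) :=
          sum_le_sum fun i hi => norm_sq_le_one_of_mem_probSimplex (hx i hi)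
      _ = #s := by simp
  · exact one_div_le_norm_sq_of_sum_eq_one hmean_sum

end Simplex

theorem subbagWeights_sub_subbagWeights_erase {n k : ℕ}
    (A : Finset (Fin n) → EuclideanSpace ℝ (Fin k)) {K : ℕ} (hKn : K < n) (i : Fin n) :
    subbagWeights A univ K - subbagWeights A (univ.erase i) K =
      ((n - 1).choose K : ℝ)⁻¹ •
        ∑ S ∈ (powersetCard K univ).filter (i ∈ ·), (A S - subbagWeights A univ K) := by
  have hcard : #((powersetCard K univ).filter (i ∉ ·)) = (n - 1).choose K := by
    rw [← powersetCard_erase, card_powersetCard, card_erase_of_mem (mem_univ i), card_fin]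
  have hne : (powersetCard K (univ : Finset (Fin n))).Nonempty :=
    powersetCard_nonempty.2 (by simp [hKn.le])
  have hsub : subbagWeights A (univ.erase i) K =
      (#((powersetCard K univ).filter (i ∉ ·)) : ℝ)⁻¹ •
        ∑ S ∈ (powersetCard K univ).filter (i ∉ ·), A S := by
    rw [subbagWeights, powersetCard_erase]
  rw [hsub, ← hcard]
  exact sub_average_filter_not_eq (sum_sub_average_eq_zero hne A) (i ∈ ·)
    (hcard ▸ (Nat.choose_pos (by omega)).ne')

theorem sum_norm_sq_sum_filter_mem_sub_subbagWeights_le {n k : ℕ}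
    {A : Finset (Fin n) → EuclideanSpace ℝ (Fin k)} (hA : ∀ S, A S ∈ probSimplex k) {K : ℕ}
    (hKn : K ≤ n) :
    ∑ i, ‖∑ S ∈ (powersetCard K univ).filter (i ∈ ·), (A S - subbagWeights A univ K)‖ ^ 2 ≤
      ((n - 1).choose K - (n - 2).choose K : ℝ) * (n.choose K * (1 - 1 / (k : ℝ))) := by
  have h𝒮 : (powersetCard K (univ : Finset (Fin n))).Nonempty :=
    powersetCard_nonempty.2 (by simpa using hKn)
  have hvar : ∑ S ∈ powersetCard K univ, ‖A S - subbagWeights A univ K‖ ^ 2 ≤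
      n.choose K * (1 - 1 / (k : ℝ)) :=
    (sum_norm_sq_sub_average_le_of_mem_probSimplex h𝒮 fun S _ => hA S).trans_eq
      (by rw [card_powersetCard, card_univ, Fintype.card_fin])
  have hkey := sum_norm_sq_sum_filter_mem_powersetCard_le K (sum_sub_average_eq_zero h𝒮 A)
  rw [Fintype.card_fin] at hkey
  exact hkey.trans (mul_le_mul_of_nonneg_left hvar
    (sub_nonneg.2 (by exact_mod_cast Nat.choose_le_choose K (by omega))))

theorem subbagging_mean_squared_loo_stability_general (n k K : ℕ) (hK : 0 < K)
    (hKn : K < n) (A : Finset (Fin n) → EuclideanSpace ℝ (Fin k))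
    (hA : ∀ S : Finset (Fin n), A S ∈ probSimplex k) :
    (1 / (n : ℝ)) * ∑ i : Fin n,
        ‖subbagWeights A Finset.univ K - subbagWeights A (Finset.univ.erase i) K‖ ^ 2
      ≤ (1 / ((n : ℝ) - 1)) * (((K : ℝ) / n) / (1 - (K : ℝ) / n)) * (1 - 1 / (k : ℝ)) := by
  obtain ⟨m, rfl⟩ : ∃ m, n = m + 2 := ⟨n - 2, by omega⟩
  simp_rw [subbagWeights_sub_subbagWeights_erase A hKn, norm_smul, mul_pow, ← mul_sum,
    Real.norm_eq_abs, sq_abs]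
  have hbound : ∑ i, ‖∑ S ∈ (powersetCard K univ).filter (i ∈ ·),
      (A S - subbagWeights A univ K)‖ ^ 2 ≤
      ((m + 1).choose K - m.choose K : ℝ) * ((m + 2).choose K * (1 - 1 / (k : ℝ))) :=
    sum_norm_sq_sum_filter_mem_sub_subbagWeights_le hA hKn.le
  have hmK : (m + 2 - K : ℝ) ≠ 0 := sub_ne_zero.2 (by exact_mod_cast hKn.ne')
  calc _ ≤ 1 / ((m + 2 : ℕ) : ℝ) * (((m + 1).choose K : ℝ)⁻¹ ^ 2 *
          (((m + 1).choose K - m.choose K) * ((m + 2).choose K * (1 - 1 / (k : ℝ))))) := by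
        gcongr ?_ * (_ * ?_)
    _ = ((m + 1).choose K - m.choose K : ℝ) * (m + 2).choose K / ((m + 1).choose K) ^ 2 /
          (m + 2) * (1 - 1 / (k : ℝ)) := by
        push_cast
        ring
    _ = _ := by
        rw [Nat.cast_choose_sub_choose_mul_choose_div m K hKn]
        push_cast
        rw [show (m : ℝ) + 2 - 1 = m + 1 by ring]
        field_simp

theorem subbagging_mean_squared_loo_stability (n k K : ℕ) (hk : 2 ≤ k) (hK : 0 < K)
    (hKn : K < n) (A : Finset (Fin n) → EuclideanSpace ℝ (Fin k))
    (hA : ∀ S : Finset (Fin n), A S ∈ probSimplex k) :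
    (1 / (n : ℝ)) * ∑ i : Fin n,
        ‖subbagWeights A Finset.univ K - subbagWeights A (Finset.univ.erase i) K‖ ^ 2
      ≤ (1 / ((n : ℝ) - 1)) * (((K : ℝ) / n) / (1 - (K : ℝ) / n)) * (1 - 1 / (k : ℝ)) :=
  subbagging_mean_squared_loo_stability_general n k K hK hKn A hA
end
end
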